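/- arXiv:2405.10152 — 7 statements merged into one kernel-verified Lean document; each statement's English description precedes it below -/
import Mathlib

section
/- In an extensional BI(_)•-algebra, the operation ∘ is associative with unit I: (a ∘ b) ∘ c = a ∘ (b ∘ c), a ∘ I = a, and I ∘ a = a for all a, b, c. Moreover B (a ∘ b) = (B a) ∘ (B b) for all a, b. -/
namespace Paper

/-- An applicative structure with distinguished elements `B`, `I` and
a unary operation `bul` (written `a•` in the paper). -/
structure BIStruct (α : Type*) where
  ap : α → α → α
  B : α
  I : α
  bul : α → α

namespace BIStruct

variable {α : Type*}

/-- `a ∘ b := B a b`. -/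
def comp (S : BIStruct α) (a b : α) : α := S.ap (S.ap S.B a) b

/-- Powers: `a⁰ = I`, `a^(n+1) = a ∘ aⁿ`. -/
def pow (S : BIStruct α) (a : α) : ℕ → α
  | 0 => S.I
  | n + 1 => S.comp a (S.pow a n)

/-- `a` has arity `m → n` iff `a• ∘ B^(m+1) = (B a) ∘ Bⁿ`. -/
def hasArity (S : BIStruct α) (a : α) (m n : ℕ) : Prop :=
  S.comp (S.bul a) (S.pow S.B (m + 1)) = S.comp (S.ap S.B a) (S.pow S.B n)

/-- The axioms of an extensional BI(_)•-algebra. -/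
structure IsExt (S : BIStruct α) : Prop where
  hB : ∀ a b c, S.ap (S.ap (S.ap S.B a) b) c = S.ap a (S.ap b c)
  hI : ∀ a, S.ap S.I a = a
  hBul : ∀ a b, S.ap (S.bul a) b = S.ap b a
  hLam : S.ap S.B S.I = S.I
  hBulApp : ∀ a b, S.bul (S.ap a b) = S.comp (S.bul b) (S.comp (S.bul a) S.B)
  hArityB : S.comp (S.bul S.B) (S.comp S.B (S.comp S.B S.B)) = S.comp (S.ap S.B S.B) S.B
  hArityI : S.comp (S.bul S.I) S.B = S.ap S.B S.I
  hArityBul : ∀ a, S.comp (S.bul (S.bul a)) S.B = S.comp (S.ap S.B (S.bul a)) S.B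

end BIStruct

end Paper

/-- In an extensional BI(_)•-algebra, `∘` is associative with unit `I`,
and `B (a ∘ b) = (B a) ∘ (B b)`. -/
theorem stmt_0 {α : Type*} (S : Paper.BIStruct α) (hS : S.IsExt) :
    (∀ a b c : α, S.comp (S.comp a b) c = S.comp a (S.comp b c)) ∧
    (∀ a : α, S.comp a S.I = a) ∧
    (∀ a : α, S.comp S.I a = a) ∧
    (∀ a b : α, S.ap S.B (S.comp a b) = S.comp (S.ap S.B a) (S.ap S.B b)) := by
  classical
  obtain ⟨hB, hI, hBul, hLam, _, hArityB, hArityI, _⟩ := hS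
  simp only [Paper.BIStruct.comp] at hArityB hArityI ⊢
  -- key distributivity: B (a ∘ b) = (B a) ∘ (B b)
  have key : ∀ a b : α, S.ap S.B (S.ap (S.ap S.B a) b)
      = S.ap (S.ap S.B (S.ap S.B a)) (S.ap S.B b) := by
    intro a b
    have h1 := congrArg (fun x => S.ap x a) hArityB
    simp only [hB] at h1
    simp only [hBul] at h1
    have h2 := congrArg (fun x => S.ap x b) h1
    simp only [hB] at h2
    exact h2.symm
  refine ⟨?_, ?_, ?_, key⟩
  · intro a b c
    have h := congrArg (fun x => S.ap x c) (key a b)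
    simp only [hB] at h ⊢
    exact h
  · intro a
    have h := congrArg (fun x => S.ap x a) hArityI
    simp only [hB, hBul, hLam, hI] at h
    exact h
  · intro a
    rw [hLam, hI]
end

section
/- In an extensional BI(_)•-algebra, if a has arity m → n, then for every element b one has (Bᵐ b) ∘ a = a ∘ (Bⁿ b), where Bᵏ b denotes the element Bᵏ applied to b. -/
/-- If `a` has arity `m → n`, then `(Bᵐ b) ∘ a = a ∘ (Bⁿ b)` for every `b`. -/
theorem stmt_1 {α : Type*} (S : Paper.BIStruct α) (hS : S.IsExt)
    {a : α} {m n : ℕ} (h : S.hasArity a m n) (b : α) :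
    S.comp (S.ap (S.pow S.B m) b) a = S.comp a (S.ap (S.pow S.B n) b) := by
  have h2 := congrArg (fun x => S.ap x b) h
  simp only [Paper.BIStruct.hasArity, Paper.BIStruct.comp, Paper.BIStruct.pow,
    hS.hB, hS.hBul] at h2 ⊢
  exact h2
end

section
/- In an extensional BI(_)•-algebra, if a has arity m → n, then B a has arity (m+1) → (n+1). -/
namespace Paper.BIStruct

variable {α : Type*} {S : BIStruct α}

/-- Applying a composition: `(u ∘ v) c = u (v c)`. -/
lemma compApp (hS : S.IsExt) (a b c : α) : S.ap (S.comp a b) c = S.ap a (S.ap b c) :=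
  hS.hB a b c

/-- Lemma C: `B (B x) ∘ B = B ∘ (B x)`, from `hArityB` applied to `x`. -/
lemma lemC (hS : S.IsExt) (x : α) :
    S.comp (S.ap S.B (S.ap S.B x)) S.B = S.comp S.B (S.ap S.B x) := by
  have h0 := congrArg (fun t => S.ap t x) hS.hArityB
  simp only [compApp hS] at h0
  -- h0 : S.ap (S.bul S.B) (S.ap S.B (S.ap S.B (S.ap S.B x)))
  --        = S.ap (S.ap S.B S.B) (S.ap S.B x)
  rw [hS.hBul] at h0
  exact h0

/-- Lemma Bul: `x ∘ a• = a• ∘ (B x)`, from `hArityBul` applied to `x`. -/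
lemma lemBul (hS : S.IsExt) (x b : α) :
    S.comp x (S.bul b) = S.comp (S.bul b) (S.ap S.B x) := by
  have h0 := congrArg (fun t => S.ap t x) (hS.hArityBul b)
  simp only [compApp hS] at h0
  rw [hS.hBul] at h0
  exact h0

/-- Right identity: `x ∘ I = x`. -/
lemma compI (hS : S.IsExt) (x : α) : S.comp x S.I = x := by
  have h0 := congrArg (fun t => S.ap t x) hS.hArityI
  simp only [compApp hS] at h0
  rw [hS.hBul, hS.hLam, hS.hI] at h0
  exact h0

/-- Left identity: `I ∘ x = x`. -/
lemma Icomp (hS : S.IsExt) (x : α) : S.comp S.I x = x := by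
  show S.ap (S.ap S.B S.I) x = x
  rw [hS.hLam, hS.hI]

/-- `B` is multiplicative: `(B x) ∘ (B y) = B (x ∘ y)`. -/
lemma lemA (hS : S.IsExt) (x y : α) :
    S.comp (S.ap S.B x) (S.ap S.B y) = S.ap S.B (S.comp x y) := by
  have h0 := congrArg (fun t => S.ap t y) (lemC hS x)
  simp only [compApp hS] at h0
  exact h0

/-- Associativity of `∘`. -/
lemma comp_assoc (hS : S.IsExt) (x y z : α) :
    S.comp (S.comp x y) z = S.comp x (S.comp y z) := by
  show S.ap (S.ap S.B (S.comp x y)) z = _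
  rw [← lemA hS, compApp hS]
  rfl

lemma pow_add (hS : S.IsExt) (j k : ℕ) :
    S.pow S.B (j + k) = S.comp (S.pow S.B j) (S.pow S.B k) := by
  induction j with
  | zero => simp [pow, Icomp hS, Nat.zero_add]
  | succ j ih =>
      have : j + 1 + k = (j + k) + 1 := by omega
      rw [this]
      show S.comp S.B (S.pow S.B (j + k)) = _
      rw [ih, ← comp_assoc hS]
      rfl

end Paper.BIStruct

/-- If `a` has arity `m → n`, then `B a` has arity `(m+1) → (n+1)`. -/
theorem stmt_3 {α : Type*} (S : Paper.BIStruct α) (hS : S.IsExt)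
    {a : α} {m n : ℕ} (h : S.hasArity a m n) :
    S.hasArity (S.ap S.B a) (m + 1) (n + 1) := by
  unfold Paper.BIStruct.hasArity at h ⊢
  have assoc := Paper.BIStruct.comp_assoc hS
  have cI := Paper.BIStruct.compI hS
  -- pow B 3 = B ∘ (B ∘ B)
  have hpow3 : S.pow S.B 3 = S.comp S.B (S.comp S.B S.B) := by
    show S.comp S.B (S.comp S.B (S.comp S.B S.I)) = _
    rw [cI]
  calc S.comp (S.bul (S.ap S.B a)) (S.pow S.B (m + 1 + 1))
      = S.comp (S.comp (S.bul a) (S.comp (S.bul S.B) S.B))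
          (S.pow S.B (m + 1 + 1)) := by rw [hS.hBulApp]
    _ = S.comp (S.bul a)
          (S.comp (S.bul S.B) (S.comp S.B (S.pow S.B (m + 1 + 1)))) := by
        rw [assoc, assoc]
    _ = S.comp (S.bul a) (S.comp (S.bul S.B) (S.pow S.B (3 + m))) := by
        have : S.comp S.B (S.pow S.B (m + 1 + 1)) = S.pow S.B (3 + m) := by
          have h1 : (3 + m) = (m + 1 + 1) + 1 := by omega
          rw [h1]; rfl
        rw [this]
    _ = S.comp (S.bul a)
          (S.comp (S.comp (S.bul S.B) (S.pow S.B 3)) (S.pow S.B m)) := by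
        rw [Paper.BIStruct.pow_add hS 3 m,
            ← assoc (S.bul S.B) (S.pow S.B 3) (S.pow S.B m)]
    _ = S.comp (S.bul a)
          (S.comp (S.comp (S.ap S.B S.B) S.B) (S.pow S.B m)) := by
        rw [hpow3, hS.hArityB]
    _ = S.comp (S.comp (S.bul a) (S.ap S.B S.B)) (S.pow S.B (m + 1)) := by
        rw [assoc (S.ap S.B S.B) S.B (S.pow S.B m), ← assoc (S.bul a)]
        rfl
    _ = S.comp (S.comp S.B (S.bul a)) (S.pow S.B (m + 1)) := by
        rw [Paper.BIStruct.lemBul hS]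
    _ = S.comp S.B (S.comp (S.bul a) (S.pow S.B (m + 1))) := assoc _ _ _
    _ = S.comp S.B (S.comp (S.ap S.B a) (S.pow S.B n)) := by rw [h]
    _ = S.comp (S.comp S.B (S.ap S.B a)) (S.pow S.B n) := (assoc _ _ _).symm
    _ = S.comp (S.comp (S.ap S.B (S.ap S.B a)) S.B) (S.pow S.B n) := by
        rw [Paper.BIStruct.lemC hS]
    _ = S.comp (S.ap S.B (S.ap S.B a)) (S.comp S.B (S.pow S.B n)) :=
        assoc _ _ _
    _ = S.comp (S.ap S.B (S.ap S.B a)) (S.pow S.B (n + 1)) := rfl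
end

section
/- In an extensional BI(_)•-algebra, an element a has arity m → 1 if and only if a = (a I)• ∘ Bᵐ. -/
namespace Paper.BIStruct

variable {α : Type*} {S : BIStruct α}

lemma ext_assoc (hS : S.IsExt) (a b c : α) :
    S.comp (S.comp a b) c = S.comp a (S.comp b c) := by
  have h := congrArg (fun x => S.ap (S.ap (S.ap x a) b) c) hS.hArityB
  simp only [comp, hS.hB, hS.hBul] at h ⊢
  exact h.symm

lemma ext_swap (hS : S.IsExt) (a b : α) :
    S.comp b (S.bul a) = S.comp (S.bul a) (S.ap S.B b) := by
  have h := congrArg (fun x => S.ap x b) (hS.hArityBul a)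
  simp only [comp, hS.hB, hS.hBul] at h ⊢
  exact h

lemma ext_Bcomp (hS : S.IsExt) (a b : α) :
    S.ap S.B (S.comp a b) = S.comp (S.ap S.B a) (S.ap S.B b) := by
  have h := congrArg (fun x => S.ap (S.ap x a) b) hS.hArityB
  simp only [comp, hS.hB, hS.hBul] at h ⊢
  exact h.symm

lemma ext_BBa (hS : S.IsExt) (a : α) :
    S.comp (S.ap S.B (S.ap S.B a)) S.B = S.comp S.B (S.ap S.B a) := by
  have h := congrArg (fun x => S.ap x a) hS.hArityB
  simp only [comp, hS.hB, hS.hBul] at h ⊢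
  exact h

lemma ext_compI (hS : S.IsExt) (a : α) : S.comp a S.I = a := by
  have h0 : S.comp (S.bul S.I) S.B = S.I := by rw [hS.hArityI, hS.hLam]
  have h := congrArg (fun x => S.ap x a) h0
  simp only [comp, hS.hB, hS.hBul, hS.hI] at h ⊢
  exact h

lemma ext_Icomp (hS : S.IsExt) (a : α) : S.comp S.I a = a := by
  simp only [comp, hS.hLam, hS.hI]

lemma ext_IbulB (hS : S.IsExt) : S.comp (S.bul S.I) S.B = S.I := by
  rw [hS.hArityI, hS.hLam]

lemma ext_powB_one (hS : S.IsExt) : S.pow S.B 1 = S.B := by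
  show S.comp S.B S.I = S.B
  exact ext_compI hS _

lemma ext_powB_succ' (hS : S.IsExt) (n : ℕ) :
    S.pow S.B (n + 1) = S.comp (S.pow S.B n) S.B := by
  induction n with
  | zero => show S.comp S.B S.I = S.comp S.I S.B; rw [ext_compI hS, ext_Icomp hS]
  | succ n ih =>
      calc S.pow S.B (n+2) = S.comp S.B (S.comp (S.pow S.B n) S.B) := by
              show S.comp S.B (S.pow S.B (n+1)) = _; rw [ih]
        _ = S.comp (S.comp S.B (S.pow S.B n)) S.B := (ext_assoc hS _ _ _).symm
        _ = S.comp (S.pow S.B (n+1)) S.B := rfl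


lemma ext_swapT (hS : S.IsExt) (a b x : α) :
    S.comp (S.bul a) (S.comp (S.ap S.B b) x) = S.comp b (S.comp (S.bul a) x) := by
  rw [← ext_assoc hS, ← ext_swap hS, ext_assoc hS]

lemma ext_BBaT (hS : S.IsExt) (a x : α) :
    S.comp S.B (S.comp (S.ap S.B a) x)
      = S.comp (S.ap S.B (S.ap S.B a)) (S.comp S.B x) := by
  rw [← ext_assoc hS, ← ext_BBa hS, ext_assoc hS]

lemma ext_arityBT (hS : S.IsExt) (x : α) :
    S.comp (S.bul S.B) (S.comp S.B (S.comp S.B (S.comp S.B x)))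
      = S.comp (S.ap S.B S.B) (S.comp S.B x) := by
  have h1 : S.comp S.B (S.comp S.B (S.comp S.B x))
      = S.comp (S.comp S.B (S.comp S.B S.B)) x := by
    rw [ext_assoc hS, ext_assoc hS]
  rw [h1, ← ext_assoc hS, hS.hArityB, ext_assoc hS]

lemma ext_arity_form (hS : S.IsExt) (c : α) (m : ℕ) :
    S.hasArity (S.comp (S.bul c) (S.pow S.B m)) m 1 := by
  induction m with
  | zero =>
      show S.comp (S.bul (S.comp (S.bul c) (S.pow S.B 0))) (S.pow S.B 1)
        = S.comp (S.ap S.B (S.comp (S.bul c) (S.pow S.B 0))) (S.pow S.B 1)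
      have h0 : S.comp (S.bul c) (S.pow S.B 0) = S.bul c := ext_compI hS _
      rw [h0, ext_powB_one hS]
      exact hS.hArityBul c
  | succ m ih =>
      set u := S.comp (S.bul c) (S.pow S.B m) with hu_def
      have hu : S.comp (S.bul c) (S.pow S.B (m+1)) = S.comp u S.B := by
        rw [ext_powB_succ' hS, ← ext_assoc hS]
      have ih' : S.comp (S.bul u) (S.pow S.B (m+1)) = S.comp (S.ap S.B u) S.B := by
        have h2 : S.comp (S.bul u) (S.pow S.B (m+1))
            = S.comp (S.ap S.B u) (S.pow S.B 1) := ih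
        rwa [ext_powB_one hS] at h2
      have IHT : ∀ x, S.comp (S.bul u) (S.comp (S.pow S.B (m+1)) x)
          = S.comp (S.ap S.B u) (S.comp S.B x) := by
        intro x
        rw [← ext_assoc hS, ih', ext_assoc hS]
      show S.comp (S.bul (S.comp (S.bul c) (S.pow S.B (m+1)))) (S.pow S.B (m+2))
        = S.comp (S.ap S.B (S.comp (S.bul c) (S.pow S.B (m+1)))) (S.pow S.B 1)
      rw [hu, ext_powB_one hS]
      calc S.comp (S.bul (S.comp u S.B)) (S.pow S.B (m+2))
          = S.comp (S.comp (S.bul S.B) (S.comp (S.bul (S.ap S.B u)) S.B))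
              (S.pow S.B (m+2)) := by
            rw [show S.comp u S.B = S.ap (S.ap S.B u) S.B from rfl, hS.hBulApp]
        _ = S.comp (S.comp (S.bul S.B)
              (S.comp (S.comp (S.bul u) (S.comp (S.bul S.B) S.B)) S.B))
              (S.pow S.B (m+2)) := by rw [hS.hBulApp S.B u]
        _ = S.comp (S.bul S.B) (S.comp (S.bul u) (S.comp (S.bul S.B)
              (S.comp S.B (S.comp S.B (S.pow S.B (m+2)))))) := by
            simp only [ext_assoc hS]
        _ = S.comp (S.bul S.B) (S.comp (S.bul u) (S.comp (S.bul S.B)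
              (S.comp S.B (S.comp S.B (S.comp S.B (S.pow S.B (m+1))))))) := rfl
        _ = S.comp (S.bul S.B) (S.comp (S.bul u)
              (S.comp (S.ap S.B S.B) (S.comp S.B (S.pow S.B (m+1))))) := by
            rw [ext_arityBT hS]
        _ = S.comp (S.bul S.B) (S.comp S.B (S.comp (S.bul u)
              (S.comp S.B (S.pow S.B (m+1))))) := by
            rw [ext_swapT hS u S.B]
        _ = S.comp (S.bul S.B) (S.comp S.B (S.comp (S.bul u)
              (S.comp (S.pow S.B (m+1)) S.B))) := by
            rw [show S.comp S.B (S.pow S.B (m+1)) = S.pow S.B (m+2) from rfl,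
              ext_powB_succ' hS (m+1)]
        _ = S.comp (S.bul S.B) (S.comp S.B
              (S.comp (S.ap S.B u) (S.comp S.B S.B))) := by rw [IHT]
        _ = S.comp (S.bul S.B) (S.comp (S.ap S.B (S.ap S.B u))
              (S.comp S.B (S.comp S.B S.B))) := by rw [ext_BBaT hS]
        _ = S.comp (S.ap S.B u) (S.comp (S.bul S.B)
              (S.comp S.B (S.comp S.B S.B))) := by rw [ext_swapT hS S.B (S.ap S.B u)]
        _ = S.comp (S.ap S.B u) (S.comp (S.ap S.B S.B) S.B) := by rw [hS.hArityB]
        _ = S.comp (S.comp (S.ap S.B u) (S.ap S.B S.B)) S.B := (ext_assoc hS _ _ _).symm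
        _ = S.comp (S.ap S.B (S.comp u S.B)) S.B := by rw [← ext_Bcomp hS]

end Paper.BIStruct

/-- `a` has arity `m → 1` iff `a = (a I)• ∘ Bᵐ`. -/
theorem stmt_6 {α : Type*} (S : Paper.BIStruct α) (hS : S.IsExt) (a : α) (m : ℕ) :
    S.hasArity a m 1 ↔ a = S.comp (S.bul (S.ap a S.I)) (S.pow S.B m) := by
  constructor
  · intro h
    have h' : S.comp (S.bul a) (S.pow S.B (m+1)) = S.comp (S.ap S.B a) (S.pow S.B 1) := h
    symm
    calc S.comp (S.bul (S.ap a S.I)) (S.pow S.B m)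
        = S.comp (S.comp (S.bul S.I) (S.comp (S.bul a) S.B)) (S.pow S.B m) := by
          rw [hS.hBulApp]
      _ = S.comp (S.bul S.I) (S.comp (S.bul a) (S.comp S.B (S.pow S.B m))) := by
          rw [Paper.BIStruct.ext_assoc hS, Paper.BIStruct.ext_assoc hS]
      _ = S.comp (S.bul S.I) (S.comp (S.ap S.B a) (S.pow S.B 1)) := by
          rw [show S.comp S.B (S.pow S.B m) = S.pow S.B (m+1) from rfl, h']
      _ = S.comp (S.bul S.I) (S.comp (S.ap S.B a) S.B) := by
          rw [Paper.BIStruct.ext_powB_one hS]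
      _ = S.comp a (S.comp (S.bul S.I) S.B) := Paper.BIStruct.ext_swapT hS S.I a S.B
      _ = S.comp a S.I := by rw [Paper.BIStruct.ext_IbulB hS]
      _ = a := Paper.BIStruct.ext_compI hS a
  · intro h
    rw [h]
    exact Paper.BIStruct.ext_arity_form hS (S.ap a S.I) m
end

section
/- In an extensional BI(_)•-algebra 𝒜, the map a ↦ a• is a bijection from 𝒜 onto the set 𝒜• = { b ∈ 𝒜 | b has arity 0 → 1 }, with inverse b ↦ b · I; that is, a• has arity 0 → 1 and a• · I = a for every a ∈ 𝒜, and (b · I)• = b for every b of arity 0 → 1. -/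
/-- `a ↦ a•` is a bijection onto the set of elements of arity `0 → 1`,
with inverse `b ↦ b · I`. -/
theorem stmt_8 {α : Type*} (S : Paper.BIStruct α) (hS : S.IsExt) :
    (∀ a : α, S.hasArity (S.bul a) 0 1) ∧
    (∀ a : α, S.ap (S.bul a) S.I = a) ∧
    (∀ b : α, S.hasArity b 0 1 → S.bul (S.ap b S.I) = b) := by
  obtain ⟨hB, hI, hBul, hLam, hBulApp, hArityB, hArityI, hArityBul⟩ := hS
  -- x ∘ I = x
  have d1 : ∀ c : α, S.ap (S.ap S.B c) S.I = c := by
    intro c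
    have h1 : S.ap (S.comp (S.bul S.I) S.B) c = S.ap S.I c := by rw [hArityI, hLam]
    simp only [Paper.BIStruct.comp, hB, hBul, hI] at h1
    exact h1
  have pow1 : S.pow S.B 1 = S.B := d1 S.B
  -- from hArityB applied to x : B (B (B (B x))) B = B B (B x)
  have e1 : ∀ x : α, S.ap (S.ap S.B (S.ap S.B (S.ap S.B x))) S.B
      = S.ap (S.ap S.B S.B) (S.ap S.B x) := by
    intro x
    have h := congrArg (fun t => S.ap t x) hArityB
    simp only [Paper.BIStruct.comp, hB, hBul] at h
    exact h
  -- B is a hom : (B x) ∘ (B y) = B (x ∘ y)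
  have d5 : ∀ x y : α, S.ap (S.ap S.B (S.ap S.B x)) (S.ap S.B y)
      = S.ap S.B (S.ap (S.ap S.B x) y) := by
    intro x y
    have h := congrArg (fun t => S.ap t y) (e1 x)
    simp only [hB] at h
    exact h
  -- associativity of ∘
  have assoc : ∀ x y z : α, S.ap (S.ap S.B (S.ap (S.ap S.B x) y)) z
      = S.ap (S.ap S.B x) (S.ap (S.ap S.B y) z) := by
    intro x y z
    have h := congrArg (fun t => S.ap t z) (d5 x y)
    simp only [hB] at h
    exact h.symm
  -- c ∘ a• = a• ∘ (B c)
  have d2 : ∀ a c : α, S.ap (S.ap S.B c) (S.bul a)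
      = S.ap (S.ap S.B (S.bul a)) (S.ap S.B c) := by
    intro a c
    have h := congrArg (fun t => S.ap t c) (hArityBul a)
    simp only [Paper.BIStruct.comp, hB, hBul] at h
    exact h
  refine ⟨?_, ?_, ?_⟩
  · intro a
    show S.comp (S.bul (S.bul a)) (S.pow S.B 1) = S.comp (S.ap S.B (S.bul a)) (S.pow S.B 1)
    rw [pow1]
    exact hArityBul a
  · intro a
    rw [hBul, hI]
  · intro b hb
    have hb' : S.ap (S.ap S.B (S.bul b)) S.B = S.ap (S.ap S.B (S.ap S.B b)) S.B := by
      have := hb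
      unfold Paper.BIStruct.hasArity at this
      rw [pow1] at this
      exact this
    calc S.bul (S.ap b S.I)
        = S.ap (S.ap S.B (S.bul S.I)) (S.ap (S.ap S.B (S.bul b)) S.B) := hBulApp b S.I
      _ = S.ap (S.ap S.B (S.bul S.I)) (S.ap (S.ap S.B (S.ap S.B b)) S.B) := by rw [hb']
      _ = S.ap (S.ap S.B (S.ap (S.ap S.B (S.bul S.I)) (S.ap S.B b))) S.B := by
            rw [assoc]
      _ = S.ap (S.ap S.B (S.ap (S.ap S.B b) (S.bul S.I))) S.B := by rw [d2]
      _ = S.ap (S.ap S.B b) (S.ap (S.ap S.B (S.bul S.I)) S.B) := assoc b (S.bul S.I) S.B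
      _ = S.ap (S.ap S.B b) (S.ap S.B S.I) := by
            have h : S.ap (S.ap S.B (S.bul S.I)) S.B = S.ap S.B S.I := hArityI
            rw [h]
      _ = S.ap (S.ap S.B b) S.I := by rw [hLam]
      _ = b := d1 b
end

section
/- Let A be a reflexive object with application app in a monoidal category 𝒞. Then the set 𝒜 = Hom(𝟙, A), with a · b = (a ⊗ b) ≫ app, B = cur(cur(cur((id_A ⊗ app) ≫ app))), I = cur(λ_A), and a• = cur((id_A ⊗ a) ≫ app) (structural isomorphisms inserted coherently), is an extensional BI(_)•-algebra: it satisfies B a b c = a (b c), I a = a, a• b = b a, B I = I, (a b)• = b• ∘ (a• ∘ B), B• ∘ (B ∘ (B ∘ B)) = (B B) ∘ B, I• ∘ B = B I, and a•• ∘ B = (B a•) ∘ B, where x ∘ y abbreviates B x y. -/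
open CategoryTheory MonoidalCategory

namespace Paper

/-- A (strictly) reflexive object in a monoidal category: an object `A` with
`app : A ⊗ A ⟶ A` such that every `f : X ⊗ A ⟶ A` has a unique currying
`cur f : X ⟶ A` with `(cur f ⊗ 𝟙 A) ≫ app = f`. -/
structure ReflexiveObj (C : Type*) [Category C] [MonoidalCategory C] where
  A : C
  app : A ⊗ A ⟶ A
  cur : ∀ {X : C}, (X ⊗ A ⟶ A) → (X ⟶ A)
  cur_app : ∀ {X : C} (f : X ⊗ A ⟶ A), (cur f ⊗ₘ 𝟙 A) ≫ app = f
  cur_unique : ∀ {X : C} (f : X ⊗ A ⟶ A) (g : X ⟶ A), (g ⊗ₘ 𝟙 A) ≫ app = f → g = cur f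

namespace ReflexiveObj

variable {C : Type*} [Category C] [MonoidalCategory C] (R : ReflexiveObj C)

/-- The application `a · b = (a ⊗ b) ≫ app` on `Hom(𝟙, A)`
(coherence isomorphisms inserted). -/
def dot (a b : 𝟙_ C ⟶ R.A) : 𝟙_ C ⟶ R.A :=
  (λ_ (𝟙_ C)).inv ≫ (a ⊗ₘ b) ≫ R.app

/-- The combinator `B = cur (cur (cur ((id_A ⊗ app) ≫ app)))`
(coherence isomorphisms inserted). -/
def combB : 𝟙_ C ⟶ R.A :=
  R.cur (R.cur (R.cur
    ((α_ (𝟙_ C ⊗ R.A) R.A R.A).hom ≫ ((λ_ R.A).hom ⊗ₘ R.app) ≫ R.app)))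

/-- The combinator `I = cur (λ_A)`. -/
def combI : 𝟙_ C ⟶ R.A := R.cur (λ_ R.A).hom

/-- The combinator `a• = cur ((id_A ⊗ a) ≫ app)`
(coherence isomorphisms inserted). -/
def bul (a : 𝟙_ C ⟶ R.A) : 𝟙_ C ⟶ R.A :=
  R.cur ((λ_ R.A).hom ≫ (ρ_ R.A).inv ≫ (𝟙 R.A ⊗ₘ a) ≫ R.app)

end ReflexiveObj

end Paper

namespace Paper
namespace ReflexiveObj

variable {C : Type*} [Category C] [MonoidalCategory C] (R : ReflexiveObj C)

/-- Uncurrying: apply a generalized element to the generic argument. -/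
def ev {X : C} (u : X ⟶ R.A) : X ⊗ R.A ⟶ R.A := (u ▷ R.A) ≫ R.app

lemma ev_cur {X : C} (f : X ⊗ R.A ⟶ R.A) : R.ev (R.cur f) = f := by
  simpa [ev, ← tensorHom_id] using R.cur_app f

lemma cur_ev {X : C} (u : X ⟶ R.A) : R.cur (R.ev u) = u :=
  (R.cur_unique _ u (by rw [tensorHom_id]; rfl)).symm

lemma ev_inj {X : C} {u v : X ⟶ R.A} (h : R.ev u = R.ev v) : u = v := by
  rw [← R.cur_ev u, h, R.cur_ev]

lemma ev_comp {X Y : C} (w : X ⟶ Y) (u : Y ⟶ R.A) :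
    R.ev (w ≫ u) = (w ▷ R.A) ≫ R.ev u := by
  simp [ev]

lemma ev_fold {X : C} (u : X ⟶ R.A) : (u ▷ R.A) ≫ R.app = R.ev u := rfl

lemma comp_cur {X Y : C} (w : X ⟶ Y) (f : Y ⊗ R.A ⟶ R.A) :
    w ≫ R.cur f = R.cur ((w ▷ R.A) ≫ f) := by
  apply R.ev_inj
  rw [ev_comp, ev_cur, ev_cur]

/-- The endomorphism of `A` induced by a point of `A`. -/
def E (a : 𝟙_ C ⟶ R.A) : R.A ⟶ R.A := (λ_ R.A).inv ≫ R.ev a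

lemma ev_eq_E (a : 𝟙_ C ⟶ R.A) : R.ev a = (λ_ R.A).hom ≫ R.E a := by
  simp [E]

lemma E_inj {a b : 𝟙_ C ⟶ R.A} (h : R.E a = R.E b) : a = b := by
  apply R.ev_inj
  rw [ev_eq_E, h, ← ev_eq_E]

lemma dot_eq (a b : 𝟙_ C ⟶ R.A) : R.dot a b = b ≫ R.E a := by
  rw [dot, E, ev, tensorHom_def']
  rw [← Category.assoc, ← Category.assoc, ← leftUnitor_inv_naturality]
  simp

lemma dot_eq' (a b : 𝟙_ C ⟶ R.A) :
    R.dot a b = a ≫ (ρ_ R.A).inv ≫ (R.A ◁ b) ≫ R.app := by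
  rw [dot, MonoidalCategory.tensorHom_def, unitors_inv_equal]
  rw [← Category.assoc, ← Category.assoc, ← rightUnitor_inv_naturality]
  simp

lemma comp_r {X : C} (u : X ⟶ R.A) (y : 𝟙_ C ⟶ R.A) :
    u ≫ (ρ_ R.A).inv ≫ (R.A ◁ y) ≫ R.app =
      (ρ_ X).inv ≫ (X ◁ y) ≫ R.ev u := by
  rw [← Category.assoc, rightUnitor_inv_naturality, Category.assoc,
    ← whisker_exchange_assoc, ev_fold]

lemma E_I : R.E R.combI = 𝟙 R.A := by
  rw [E, combI, ev_cur]; simp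

lemma E_bul (a : 𝟙_ C ⟶ R.A) :
    R.E (R.bul a) = (ρ_ R.A).inv ≫ (R.A ◁ a) ≫ R.app := by
  rw [E, bul, ev_cur, id_tensorHom]
  simp

lemma ev_E_combB :
    R.ev (R.E R.combB) = ((λ_ R.A).inv ▷ R.A) ≫
      R.cur ((α_ (𝟙_ C ⊗ R.A) R.A R.A).hom ≫ ((λ_ R.A).hom ⊗ₘ R.app) ≫ R.app) := by
  rw [E, combB, ev_cur, ev_comp, ev_cur]

lemma ev_ev_E_combB :
    R.ev (R.ev (R.E R.combB)) =
      (α_ R.A R.A R.A).hom ≫ (R.A ◁ R.app) ≫ R.app := by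
  rw [ev_E_combB, ev_comp, ev_cur]
  rw [tensorHom_def (λ_ R.A).hom R.app]
  rw [associator_naturality_left_assoc]
  simp

lemma E_dotB (a : 𝟙_ C ⟶ R.A) :
    R.E (R.dot R.combB a) = R.cur (R.app ≫ R.E a) := by
  apply R.ev_inj
  rw [ev_cur]
  rw [E, R.dot_eq R.combB a, ev_comp, ev_comp, ev_comp, ev_ev_E_combB]
  rw [associator_naturality_left_assoc]
  rw [← whisker_exchange_assoc]
  rw [← leftUnitor_tensor_inv_assoc]
  rw [← leftUnitor_inv_naturality_assoc, ev_fold]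
  rfl

lemma E_comp (a b : 𝟙_ C ⟶ R.A) :
    R.E (R.dot (R.dot R.combB a) b) = R.E b ≫ R.E a := by
  rw [E, R.dot_eq (R.dot R.combB a) b, ev_comp, E_dotB, ev_cur, E, E]
  simp [ev]

lemma EB_r (x : 𝟙_ C ⟶ R.A) :
    R.E R.combB ≫ (ρ_ R.A).inv ≫ (R.A ◁ x) ≫ R.app =
      R.cur ((R.A ◁ R.E x) ≫ R.app) := by
  apply R.ev_inj
  rw [ev_cur, comp_r, ev_comp, ev_comp, ev_ev_E_combB]
  rw [associator_naturality_middle_assoc]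
  rw [← MonoidalCategory.whiskerLeft_comp_assoc, ev_fold, R.ev_eq_E x,
    MonoidalCategory.whiskerLeft_comp_assoc, triangle_assoc]
  simp

lemma EB_M (a : 𝟙_ C ⟶ R.A) :
    R.E R.combB ≫ R.cur (R.app ≫ (ρ_ R.A).inv ≫ (R.A ◁ a) ≫ R.app) =
      R.cur ((R.A ◁ ((ρ_ R.A).inv ≫ (R.A ◁ a) ≫ R.app)) ≫ R.app) := by
  apply R.ev_inj
  rw [ev_cur, ev_comp, ev_cur]
  have h1 : (R.E R.combB ▷ R.A) ≫ R.app ≫ (ρ_ R.A).inv ≫ (R.A ◁ a) ≫ R.app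
      = R.ev (R.E R.combB) ≫ (ρ_ R.A).inv ≫ (R.A ◁ a) ≫ R.app := by
    rw [ev]; simp
  rw [h1, comp_r, ev_ev_E_combB]
  rw [associator_naturality_right_assoc]
  rw [← whiskerLeft_rightUnitor_inv_assoc]
  simp

lemma cur_app_eq_id : R.cur R.app = 𝟙 R.A :=
  (R.cur_unique R.app (𝟙 R.A) (by simp)).symm

/-- Internal associativity of composition: the key computation for `hArityB`. -/
lemma w_assoc :
    (α_ R.A R.A R.A).hom ≫ (R.A ◁ R.ev (R.E R.combB)) ≫ R.ev (R.E R.combB) =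
      (R.ev (R.E R.combB) ▷ R.A) ≫ R.ev (R.E R.combB) := by
  apply R.ev_inj
  conv_lhs =>
    rw [ev_comp, ev_comp, ev_ev_E_combB,
      associator_naturality_middle_assoc,
      ← MonoidalCategory.whiskerLeft_comp_assoc, ev_fold, ev_ev_E_combB,
      MonoidalCategory.whiskerLeft_comp, MonoidalCategory.whiskerLeft_comp, Category.assoc, Category.assoc,
      pentagon_assoc]
  conv_rhs =>
    rw [ev_comp, ev_ev_E_combB,
      associator_naturality_left_assoc, ← whisker_exchange_assoc,
      ev_fold, ev_ev_E_combB, associator_naturality_right_assoc]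

/-- The second key computation for `hArityB`. -/
lemma G2 :
    ((R.E R.combB ≫ R.E R.combB) ▷ R.A) ≫ (R.A ◁ R.E R.combB) ≫ R.app =
      (R.E R.combB ▷ R.A) ≫ R.app ≫ R.E R.combB := by
  apply R.ev_inj
  conv_rhs =>
    rw [← Category.assoc, ev_fold, ev_comp]
  conv_lhs =>
    rw [comp_whiskerRight_assoc, ← whisker_exchange_assoc, ev_fold,
      ev_comp, ev_comp, ev_ev_E_combB,
      associator_naturality_middle_assoc, ← MonoidalCategory.whiskerLeft_comp_assoc,
      ev_fold, associator_naturality_left_assoc,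
      ← whisker_exchange_assoc, ev_fold]
  exact R.w_assoc

end ReflexiveObj
end Paper

/-- `Hom(𝟙, A)` for a reflexive object `A`, with the induced application,
`B`, `I`, and `(−)•`, is an extensional BI(_)•-algebra. -/
theorem stmt_9 {C : Type*} [CategoryTheory.Category C]
    [CategoryTheory.MonoidalCategory C] (R : Paper.ReflexiveObj C) :
    (Paper.BIStruct.mk R.dot R.combB R.combI R.bul).IsExt := by
  constructor
  case hB =>
    intro a b c
    show R.dot (R.dot (R.dot R.combB a) b) c = R.dot a (R.dot b c)
    rw [R.dot_eq (R.dot (R.dot R.combB a) b) c, R.E_comp,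
      R.dot_eq a (R.dot b c), R.dot_eq b c]
    simp
  case hI =>
    intro a
    show R.dot R.combI a = a
    rw [R.dot_eq, R.E_I, Category.comp_id]
  case hBul =>
    intro a b
    show R.dot (R.bul a) b = R.dot b a
    rw [R.dot_eq (R.bul a) b, R.E_bul, R.dot_eq' b a]
  case hLam =>
    show R.dot R.combB R.combI = R.combI
    apply R.E_inj
    rw [R.E_dotB, R.E_I, Category.comp_id, R.cur_app_eq_id]
  case hBulApp =>
    intro a b
    show R.bul (R.dot a b) =
      R.dot (R.dot R.combB (R.bul b)) (R.dot (R.dot R.combB (R.bul a)) R.combB)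
    apply R.E_inj
    rw [R.E_comp, R.E_comp, R.E_bul a, R.EB_r a, R.E_bul b]
    rw [R.comp_r, R.ev_cur, R.E_bul (R.dot a b), R.dot_eq a b]
    simp
  case hArityB =>
    show R.dot (R.dot R.combB (R.bul R.combB))
        (R.dot (R.dot R.combB R.combB) (R.dot (R.dot R.combB R.combB) R.combB)) =
      R.dot (R.dot R.combB (R.dot R.combB R.combB)) R.combB
    apply R.E_inj
    rw [R.E_comp, R.E_comp, R.E_comp, R.E_comp, R.E_dotB]
    rw [R.E_bul R.combB]
    rw [Category.assoc, R.EB_r R.combB]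
    rw [R.comp_cur, R.comp_cur]
    congr 1
    exact R.G2
  case hArityI =>
    show R.dot (R.dot R.combB (R.bul R.combI)) R.combB = R.dot R.combB R.combI
    apply R.E_inj
    rw [R.E_comp, R.E_bul R.combI, R.EB_r R.combI, R.E_I, R.E_dotB, R.E_I]
    simp
  case hArityBul =>
    intro a
    show R.dot (R.dot R.combB (R.bul (R.bul a))) R.combB =
      R.dot (R.dot R.combB (R.dot R.combB (R.bul a))) R.combB
    apply R.E_inj
    rw [R.E_comp, R.E_comp, R.E_bul (R.bul a), R.EB_r (R.bul a), R.E_dotB, R.E_bul a]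
    exact (R.EB_M a).symm
end

section
/- Every extensional BI(_)•-algebra 𝒜 is isomorphic to one arising from a reflexive object in a monoidal category: there exist a monoidal category 𝒞, a reflexive object (A, app) in 𝒞, and a bijection φ : 𝒜 → Hom(𝟙, A) with φ(a · b) = φ(a) ·' φ(b), φ(B) = B', φ(I) = I', and φ(a•) = φ(a)•' for all a, b ∈ 𝒜, where ·', B', I', (−)•' are the extensional BI(_)•-algebra operations on Hom(𝟙, A) induced by (A, app). -/
open CategoryTheory MonoidalCategory

namespace Paper

/-- A presentation of an extensional BI(_)•-algebra as `Hom(𝟙, A)` for a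
reflexive object `A` in a monoidal category: a bijection preserving the
application, `B`, `I`, and `(−)•`. -/
structure ReflexiveModel {α : Type u} (S : BIStruct α) where
  C : Type u
  [instC : CategoryTheory.Category.{u} C]
  [instM : CategoryTheory.MonoidalCategory C]
  R : ReflexiveObj C
  equiv : α ≃ (𝟙_ C ⟶ R.A)
  map_ap : ∀ a b : α, equiv (S.ap a b) = R.dot (equiv a) (equiv b)
  map_B : equiv S.B = R.combB
  map_I : equiv S.I = R.combI
  map_bul : ∀ a : α, equiv (S.bul a) = R.bul (equiv a)

end Paper

namespace StmtAux

open Paper Paper.BIStruct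

universe u

variable {α : Type u} {S : BIStruct α}

theorem apc (hS : S.IsExt) (u v w : α) : S.ap (S.comp u v) w = S.ap u (S.ap v w) :=
  hS.hB u v w

theorem icomp (hS : S.IsExt) (w : α) : S.comp S.I w = w := by
  show S.ap (S.ap S.B S.I) w = w
  rw [hS.hLam, hS.hI]

theorem compi (hS : S.IsExt) (w : α) : S.comp w S.I = w := by
  show S.ap (S.ap S.B w) S.I = w
  rw [← hS.hBul S.I (S.ap S.B w), ← apc hS, hS.hArityI, hS.hLam, hS.hI]

theorem wlem (hS : S.IsExt) (g : α) :
    S.comp (S.ap S.B (S.ap S.B g)) S.B = S.comp S.B (S.ap S.B g) := by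
  have h := congrArg (fun z => S.ap z g) hS.hArityB
  simp only [apc hS] at h
  rw [hS.hBul] at h
  exact h

theorem star (hS : S.IsExt) (u v : α) :
    S.comp (S.ap S.B u) (S.ap S.B v) = S.ap S.B (S.comp u v) := by
  have h := congrArg (fun z => S.ap z v) (wlem hS u)
  simp only [apc hS] at h
  exact h

theorem cassoc (hS : S.IsExt) (u v w : α) :
    S.comp (S.comp u v) w = S.comp u (S.comp v w) := by
  have h := congrArg (fun z => S.ap z w) (star hS u v)
  simp only [apc hS] at h
  exact h.symm

theorem intbul (hS : S.IsExt) (g b : α) :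
    S.comp g (S.bul b) = S.comp (S.bul b) (S.ap S.B g) := by
  have h := congrArg (fun z => S.ap z g) (hS.hArityBul b)
  simp only [apc hS] at h
  rw [hS.hBul] at h
  exact h

theorem pow_succ_ap (hS : S.IsExt) (n : ℕ) (g : α) :
    S.ap (S.pow S.B (n+1)) g = S.ap S.B (S.ap (S.pow S.B n) g) :=
  apc hS S.B (S.pow S.B n) g

theorem pow_zero_ap (hS : S.IsExt) (g : α) : S.ap (S.pow S.B 0) g = g := hS.hI g

theorem pow_I (hS : S.IsExt) (n : ℕ) : S.ap (S.pow S.B n) S.I = S.I := by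
  induction n with
  | zero => exact hS.hI S.I
  | succ n ih => rw [pow_succ_ap hS, ih, hS.hLam]

theorem pow_one (hS : S.IsExt) : S.pow S.B 1 = S.B := compi hS S.B

theorem pow_succ' (hS : S.IsExt) (n : ℕ) :
    S.pow S.B (n+1) = S.comp (S.pow S.B n) S.B := by
  induction n with
  | zero => exact (pow_one hS).trans (icomp hS S.B).symm
  | succ n ih =>
    show S.comp S.B (S.pow S.B (n+1)) = S.comp (S.pow S.B (n+1)) S.B
    conv_lhs => rw [ih]
    rw [← cassoc hS]
    rfl

theorem pow_add_ap (hS : S.IsExt) (k l : ℕ) (g : α) :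
    S.ap (S.pow S.B (k+l)) g = S.ap (S.pow S.B k) (S.ap (S.pow S.B l) g) := by
  induction k with
  | zero => rw [Nat.zero_add, pow_zero_ap hS]
  | succ k ih =>
    rw [Nat.succ_add]
    rw [pow_succ_ap hS, ih, ← pow_succ_ap hS]

theorem pow_comp (hS : S.IsExt) (k : ℕ) (u v : α) :
    S.comp (S.ap (S.pow S.B k) u) (S.ap (S.pow S.B k) v)
      = S.ap (S.pow S.B k) (S.comp u v) := by
  induction k with
  | zero => rw [pow_zero_ap hS, pow_zero_ap hS, pow_zero_ap hS]
  | succ k ih =>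
    rw [pow_succ_ap hS, pow_succ_ap hS, star hS, ih, ← pow_succ_ap hS]

theorem bulB_pow (hS : S.IsExt) (k : ℕ) :
    S.comp (S.bul S.B) (S.pow S.B (k+3)) = S.comp (S.ap S.B S.B) (S.pow S.B (k+1)) := by
  show S.comp (S.bul S.B) (S.comp S.B (S.comp S.B (S.comp S.B (S.pow S.B k))))
      = S.comp (S.ap S.B S.B) (S.comp S.B (S.pow S.B k))
  rw [← cassoc hS S.B S.B (S.pow S.B k),
      ← cassoc hS S.B (S.comp S.B S.B) (S.pow S.B k),
      ← cassoc hS (S.bul S.B) (S.comp S.B (S.comp S.B S.B)) (S.pow S.B k),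
      hS.hArityB, cassoc hS]

theorem Mlem (hS : S.IsExt) (m : ℕ) :
    S.comp (S.comp (S.bul S.B) (S.comp S.B S.B)) (S.pow S.B (m+1))
      = S.comp (S.ap S.B S.B) (S.pow S.B (m+1)) := by
  rw [cassoc hS, cassoc hS]
  exact bulB_pow hS m

theorem arity_I (hS : S.IsExt) (n : ℕ) : S.hasArity S.I n n := by
  show S.comp (S.bul S.I) (S.pow S.B (n+1)) = S.comp (S.ap S.B S.I) (S.pow S.B n)
  rw [show S.pow S.B (n+1) = S.comp S.B (S.pow S.B n) from rfl,
      ← cassoc hS, hS.hArityI]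

theorem arity_bul (hS : S.IsExt) (a : α) : S.hasArity (S.bul a) 0 1 := by
  show S.comp (S.bul (S.bul a)) (S.pow S.B 1) = S.comp (S.ap S.B (S.bul a)) (S.pow S.B 1)
  rw [pow_one hS]
  exact hS.hArityBul a

theorem arity_B (hS : S.IsExt) : S.hasArity S.B 2 1 := by
  show S.comp (S.bul S.B) (S.pow S.B 3) = S.comp (S.ap S.B S.B) (S.pow S.B 1)
  rw [pow_one hS, show S.pow S.B 3 = S.comp S.B (S.comp S.B (S.comp S.B S.I)) from rfl,
      compi hS S.B]
  exact hS.hArityB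

theorem intar (hS : S.IsExt) {a : α} {n n' : ℕ} (ha : S.hasArity a n n') (g : α) :
    S.comp (S.ap (S.pow S.B n) g) a = S.comp a (S.ap (S.pow S.B n') g) := by
  have h := congrArg (fun z => S.ap z g) ha
  simp only [apc hS] at h
  rw [pow_succ_ap hS n g] at h
  rw [hS.hBul] at h
  exact h

theorem arity_comp (hS : S.IsExt) {a b : α} {m n p : ℕ}
    (ha : S.hasArity a m n) (hb : S.hasArity b n p) :
    S.hasArity (S.comp a b) m p := by
  have ha' : S.comp (S.bul a) (S.pow S.B (m+1)) = S.comp (S.ap S.B a) (S.pow S.B n) := ha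
  have hb' : S.comp (S.bul b) (S.pow S.B (n+1)) = S.comp (S.ap S.B b) (S.pow S.B p) := hb
  show S.comp (S.bul (S.comp a b)) (S.pow S.B (m+1))
      = S.comp (S.ap S.B (S.comp a b)) (S.pow S.B p)
  have h1 : S.bul (S.comp a b)
      = S.comp (S.bul b) (S.comp (S.bul a) (S.comp (S.bul S.B) (S.comp S.B S.B))) := by
    show S.bul (S.ap (S.ap S.B a) b) = _
    rw [hS.hBulApp, hS.hBulApp, cassoc hS, cassoc hS]
  rw [h1, cassoc hS, cassoc hS, Mlem hS m,
      ← cassoc hS (S.bul a) (S.ap S.B S.B) (S.pow S.B (m+1)),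
      ← intbul hS, cassoc hS S.B (S.bul a) (S.pow S.B (m+1)), ha',
      ← cassoc hS S.B (S.ap S.B a) (S.pow S.B n), ← wlem hS a,
      cassoc hS (S.ap S.B (S.ap S.B a)) S.B (S.pow S.B n),
      show S.comp S.B (S.pow S.B n) = S.pow S.B (n+1) from rfl,
      ← cassoc hS (S.bul b) (S.ap S.B (S.ap S.B a)) (S.pow S.B (n+1)),
      ← intbul hS, cassoc hS, hb', ← cassoc hS, star hS]

theorem arity_lift (hS : S.IsExt) {a : α} {m n : ℕ} (ha : S.hasArity a m n) (k : ℕ) :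
    S.hasArity a (m+k) (n+k) := by
  induction k with
  | zero => exact ha
  | succ k ih =>
    rw [← Nat.add_assoc m k 1, ← Nat.add_assoc n k 1]
    have ih' : S.comp (S.bul a) (S.pow S.B (m+k+1)) = S.comp (S.ap S.B a) (S.pow S.B (n+k)) := ih
    show S.comp (S.bul a) (S.pow S.B (m+k+1+1)) = S.comp (S.ap S.B a) (S.pow S.B (n+k+1))
    rw [pow_succ' hS (m+k+1), pow_succ' hS (n+k), ← cassoc hS, ih', cassoc hS]

theorem arity_step (hS : S.IsExt) {u : α} {r s : ℕ} (hu : S.hasArity u r s) :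
    S.hasArity (S.ap S.B u) (r+1) (s+1) := by
  have hu' : S.comp (S.bul u) (S.pow S.B (r+1)) = S.comp (S.ap S.B u) (S.pow S.B s) := hu
  show S.comp (S.bul (S.ap S.B u)) (S.pow S.B (r+2))
      = S.comp (S.ap S.B (S.ap S.B u)) (S.pow S.B (s+1))
  rw [hS.hBulApp, cassoc hS, cassoc hS,
      show S.comp S.B (S.pow S.B (r+2)) = S.pow S.B (r+3) from rfl,
      bulB_pow hS r,
      ← cassoc hS (S.bul u) (S.ap S.B S.B) (S.pow S.B (r+1)),
      ← intbul hS, cassoc hS, hu',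
      ← cassoc hS S.B (S.ap S.B u) (S.pow S.B s), ← wlem hS u,
      cassoc hS (S.ap S.B (S.ap S.B u)) S.B (S.pow S.B s)]
  rfl

theorem arity_pass (hS : S.IsExt) {g : α} {p q : ℕ} (hg : S.hasArity g p q) (k : ℕ) :
    S.hasArity (S.ap (S.pow S.B k) g) (k+p) (k+q) := by
  induction k with
  | zero =>
    rw [Nat.zero_add, Nat.zero_add, pow_zero_ap hS]
    exact hg
  | succ k ih =>
    rw [pow_succ_ap hS, Nat.add_right_comm k 1 p, Nat.add_right_comm k 1 q]
    exact arity_step hS ih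

theorem arity_pow (hS : S.IsExt) (m : ℕ) : S.hasArity (S.pow S.B m) (m+1) 1 := by
  induction m with
  | zero => exact arity_I hS 1
  | succ m ih =>
    have ih' : S.comp (S.bul (S.pow S.B m)) (S.pow S.B (m+2))
        = S.comp (S.ap S.B (S.pow S.B m)) (S.pow S.B 1) := ih
    show S.comp (S.bul (S.ap (S.ap S.B S.B) (S.pow S.B m))) (S.pow S.B (m+3))
        = S.comp (S.ap S.B (S.pow S.B (m+1))) (S.pow S.B 1)
    rw [hS.hBulApp, hS.hBulApp,
        cassoc hS (S.bul S.B) (S.comp (S.bul S.B) S.B) S.B,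
        cassoc hS (S.bul S.B) S.B S.B,
        cassoc hS,
        cassoc hS (S.bul S.B) (S.comp (S.bul S.B) (S.comp S.B S.B)) (S.pow S.B (m+3)),
        Mlem hS (m+2),
        ← cassoc hS (S.bul S.B) (S.ap S.B S.B) (S.pow S.B (m+3)),
        ← intbul hS,
        cassoc hS S.B (S.bul S.B) (S.pow S.B (m+3)),
        bulB_pow hS m,
        ← cassoc hS S.B (S.ap S.B S.B) (S.pow S.B (m+1)),
        ← wlem hS S.B,
        cassoc hS (S.ap S.B (S.ap S.B S.B)) S.B (S.pow S.B (m+1)),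
        show S.comp S.B (S.pow S.B (m+1)) = S.pow S.B (m+2) from rfl,
        ← cassoc hS (S.bul (S.pow S.B m)) (S.ap S.B (S.ap S.B S.B)) (S.pow S.B (m+2)),
        ← intbul hS,
        cassoc hS, ih', pow_one hS, ← cassoc hS, star hS]
    rfl

theorem arity_cur (hS : S.IsExt) (e : α) (m : ℕ) :
    S.hasArity (S.comp (S.bul e) (S.pow S.B m)) m 1 := by
  have hp : S.comp (S.bul (S.pow S.B m)) (S.comp S.B (S.comp S.B (S.pow S.B m)))
      = S.comp (S.ap S.B (S.pow S.B m)) (S.pow S.B 1) := arity_pow hS m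
  show S.comp (S.bul (S.comp (S.bul e) (S.pow S.B m))) (S.pow S.B (m+1))
      = S.comp (S.ap S.B (S.comp (S.bul e) (S.pow S.B m))) (S.pow S.B 1)
  conv_lhs =>
    rw [show S.comp (S.bul e) (S.pow S.B m) = S.ap (S.ap S.B (S.bul e)) (S.pow S.B m) from rfl]
  rw [hS.hBulApp, hS.hBulApp,
      cassoc hS (S.bul (S.bul e)) (S.comp (S.bul S.B) S.B) S.B,
      cassoc hS (S.bul S.B) S.B S.B,
      cassoc hS,
      cassoc hS (S.bul (S.bul e)) (S.comp (S.bul S.B) (S.comp S.B S.B)) (S.pow S.B (m+1)),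
      Mlem hS m,
      ← cassoc hS (S.bul (S.bul e)) (S.ap S.B S.B) (S.pow S.B (m+1)),
      ← intbul hS,
      cassoc hS S.B (S.bul (S.bul e)) (S.pow S.B (m+1)),
      show S.pow S.B (m+1) = S.comp S.B (S.pow S.B m) from rfl,
      ← cassoc hS (S.bul (S.bul e)) S.B (S.pow S.B m),
      hS.hArityBul e,
      cassoc hS (S.ap S.B (S.bul e)) S.B (S.pow S.B m),
      ← cassoc hS S.B (S.ap S.B (S.bul e)) (S.comp S.B (S.pow S.B m)),
      ← wlem hS (S.bul e),
      cassoc hS (S.ap S.B (S.ap S.B (S.bul e))) S.B (S.comp S.B (S.pow S.B m)),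
      ← cassoc hS (S.bul (S.pow S.B m)) (S.ap S.B (S.ap S.B (S.bul e)))
        (S.comp S.B (S.comp S.B (S.pow S.B m))),
      ← intbul hS,
      cassoc hS, hp, pow_one hS, ← cassoc hS, star hS]

theorem cf (hS : S.IsExt) {a : α} {m : ℕ} (ha : S.hasArity a m 1) :
    S.comp (S.bul (S.ap a S.I)) (S.pow S.B m) = a := by
  have ha' : S.comp (S.bul a) (S.comp S.B (S.pow S.B m)) = S.comp (S.ap S.B a) (S.pow S.B 1) := ha
  rw [hS.hBulApp a S.I, cassoc hS, cassoc hS (S.bul a) S.B (S.pow S.B m), ha',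
      pow_one hS, ← cassoc hS, ← intbul hS, cassoc hS, hS.hArityI, hS.hLam, compi hS]

theorem curApI (hS : S.IsExt) (e : α) (m : ℕ) :
    S.ap (S.comp (S.bul e) (S.pow S.B m)) S.I = e := by
  rw [apc hS, pow_I hS, hS.hBul, hS.hI]

end StmtAux

namespace StmtAux

open Paper Paper.BIStruct

universe u
variable {α : Type u}

def MObj (S : BIStruct α) (hS : S.IsExt) : Type u :=
  ULift.{u} {f : ℕ → ℕ // ∀ n, f n = f 0 + n}

variable {S : BIStruct α} {hS : S.IsExt}

def deg (X : MObj S hS) : ℕ := X.down.val 0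

def munit : MObj S hS := ⟨⟨fun n => n, fun n => (Nat.zero_add n).symm⟩⟩

def mtensor (X Y : MObj S hS) : MObj S hS :=
  ⟨⟨fun n => X.down.val (Y.down.val n), by
    intro n
    show X.down.val (Y.down.val n) = X.down.val (Y.down.val 0) + n
    rw [X.down.property (Y.down.val n), X.down.property (Y.down.val 0), Y.down.property n]
    omega⟩⟩

theorem deg_mtensor (X Y : MObj S hS) : deg (mtensor X Y) = deg X + deg Y :=
  X.down.property (Y.down.val 0)

def mA : MObj S hS := ⟨⟨fun n => n + 1, fun n => by show n + 1 = 0 + 1 + n; omega⟩⟩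

instance mcat (S : BIStruct α) (hS : S.IsExt) : Category.{u} (MObj S hS) where
  Hom X Y := {a : α // S.hasArity a (deg X) (deg Y)}
  id X := ⟨S.I, arity_I hS (deg X)⟩
  comp f g := ⟨S.comp f.val g.val, arity_comp hS f.property g.property⟩
  id_comp f := Subtype.ext (icomp hS f.val)
  comp_id f := Subtype.ext (compi hS f.val)
  assoc f g h := Subtype.ext (cassoc hS f.val g.val h.val)

def degIso (hS : S.IsExt) {X Y : MObj S hS} (h : deg X = deg Y) : X ≅ Y where
  hom := ⟨S.I, by rw [← h]; exact arity_I hS (deg X)⟩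
  inv := ⟨S.I, by rw [h]; exact arity_I hS (deg Y)⟩
  hom_inv_id := Subtype.ext (icomp hS S.I)
  inv_hom_id := Subtype.ext (icomp hS S.I)

instance mmon (S : BIStruct α) (hS : S.IsExt) : MonoidalCategory (MObj S hS) where
  tensorObj := mtensor
  whiskerLeft X {Y₁ Y₂} f :=
    ⟨S.ap (S.pow S.B (deg X)) f.val, by
      rw [deg_mtensor, deg_mtensor]; exact arity_pass hS f.property (deg X)⟩
  whiskerRight {X₁ X₂} f Y :=
    ⟨f.val, by
      rw [deg_mtensor, deg_mtensor]; exact arity_lift hS f.property (deg Y)⟩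
  tensorHom {X₁ Y₁ X₂ Y₂} f g :=
    ⟨S.comp f.val (S.ap (S.pow S.B (deg Y₁)) g.val), by
      rw [deg_mtensor, deg_mtensor]
      exact arity_comp hS (arity_lift hS f.property (deg X₂)) (arity_pass hS g.property (deg Y₁))⟩
  tensorUnit := munit
  associator X Y Z := degIso hS rfl
  leftUnitor X := degIso hS rfl
  rightUnitor X := degIso hS rfl
  tensorHom_def f g := Subtype.ext rfl
  id_tensorHom_id X₁ X₂ := Subtype.ext (by
    show S.comp S.I (S.ap (S.pow S.B (deg X₁)) S.I) = S.I
    rw [pow_I hS, icomp hS])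
  tensorHom_comp_tensorHom := by
    intro X₁ Y₁ Z₁ X₂ Y₂ Z₂ f₁ f₂ g₁ g₂
    apply Subtype.ext
    symm
    show S.comp (S.comp f₁.val g₁.val) (S.ap (S.pow S.B (deg Z₁)) (S.comp f₂.val g₂.val))
        = S.comp (S.comp f₁.val (S.ap (S.pow S.B (deg Y₁)) f₂.val))
            (S.comp g₁.val (S.ap (S.pow S.B (deg Z₁)) g₂.val))
    rw [← pow_comp hS (deg Z₁) f₂.val g₂.val,
        cassoc hS f₁.val g₁.val _,
        ← cassoc hS g₁.val (S.ap (S.pow S.B (deg Z₁)) f₂.val) (S.ap (S.pow S.B (deg Z₁)) g₂.val),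
        ← intar hS g₁.property f₂.val,
        cassoc hS (S.ap (S.pow S.B (deg Y₁)) f₂.val) g₁.val _,
        ← cassoc hS f₁.val (S.ap (S.pow S.B (deg Y₁)) f₂.val) _]
  whiskerLeft_id X Y := Subtype.ext (pow_I hS (deg X))
  id_whiskerRight X Y := Subtype.ext rfl
  associator_naturality := by
    intro X₁ X₂ X₃ Y₁ Y₂ Y₃ f₁ f₂ f₃
    apply Subtype.ext
    show S.comp (S.comp (S.comp f₁.val (S.ap (S.pow S.B (deg Y₁)) f₂.val))
            (S.ap (S.pow S.B (deg (mtensor Y₁ Y₂))) f₃.val)) S.I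
        = S.comp S.I (S.comp f₁.val
            (S.ap (S.pow S.B (deg Y₁)) (S.comp f₂.val (S.ap (S.pow S.B (deg Y₂)) f₃.val))))
    rw [compi hS, icomp hS, deg_mtensor, pow_add_ap hS (deg Y₁) (deg Y₂) f₃.val,
        cassoc hS, pow_comp hS]
  leftUnitor_naturality := by
    intro X Y f
    apply Subtype.ext
    show S.comp (S.ap (S.pow S.B 0) f.val) S.I = S.comp S.I f.val
    rw [pow_zero_ap hS, compi hS, icomp hS]
  rightUnitor_naturality := by
    intro X Y f
    apply Subtype.ext
    show S.comp f.val S.I = S.comp S.I f.val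
    rw [compi hS, icomp hS]
  pentagon := by
    intro W X Y Z
    apply Subtype.ext
    show S.comp S.I (S.comp S.I (S.ap (S.pow S.B (deg W)) S.I)) = S.comp S.I S.I
    rw [pow_I hS, icomp hS, icomp hS]
  triangle := by
    intro X Y
    apply Subtype.ext
    show S.comp S.I (S.ap (S.pow S.B (deg X)) S.I) = S.I
    rw [pow_I hS, icomp hS]

def mref (S : BIStruct α) (hS : S.IsExt) : ReflexiveObj (MObj S hS) where
  A := mA
  app := ⟨S.B, arity_B hS⟩
  cur {X} f := ⟨S.comp (S.bul (S.ap f.val S.I)) (S.pow S.B (deg X)), arity_cur hS _ (deg X)⟩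
  cur_app {X} f := by
    apply Subtype.ext
    show S.comp (S.comp (S.comp (S.bul (S.ap f.val S.I)) (S.pow S.B (deg X)))
        (S.ap (S.pow S.B 1) S.I)) S.B = f.val
    have hf : S.hasArity f.val (deg X + 1) 1 := by
      have h' : S.hasArity f.val (X.down.val 1) 1 := f.property
      rwa [X.down.property 1] at h'
    rw [pow_one hS, hS.hLam, compi hS, cassoc hS, ← pow_succ' hS (deg X)]
    exact cf hS hf
  cur_unique {X} f g hg := by
    apply Subtype.ext
    have hv : S.comp (S.comp g.val (S.ap (S.pow S.B 1) S.I)) S.B = f.val :=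
      congrArg Subtype.val hg
    rw [pow_one hS, hS.hLam, compi hS] at hv
    have hg2 : S.hasArity g.val (deg X) 1 := g.property
    show g.val = S.comp (S.bul (S.ap f.val S.I)) (S.pow S.B (deg X))
    have e1 : S.ap f.val S.I = S.ap g.val S.I := by
      rw [← hv, apc hS, hS.hLam]
    rw [e1]
    exact (cf hS hg2).symm

def mequiv (S : BIStruct α) (hS : S.IsExt) : α ≃ (𝟙_ (MObj S hS) ⟶ (mref S hS).A) where
  toFun a := ⟨S.bul a, arity_bul hS a⟩
  invFun f := S.ap f.val S.I
  left_inv a := by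
    show S.ap (S.bul a) S.I = a
    rw [hS.hBul, hS.hI]
  right_inv f := by
    apply Subtype.ext
    have h0 : S.hasArity f.val 0 1 := f.property
    show S.bul (S.ap f.val S.I) = f.val
    calc S.bul (S.ap f.val S.I) = S.comp (S.bul (S.ap f.val S.I)) S.I := (compi hS _).symm
      _ = f.val := cf hS h0

theorem m_map_ap (S : BIStruct α) (hS : S.IsExt) (a b : α) :
    mequiv S hS (S.ap a b) = (mref S hS).dot (mequiv S hS a) (mequiv S hS b) := by
  apply Subtype.ext
  show S.bul (S.ap a b)
      = S.comp S.I (S.comp (S.comp (S.bul a) (S.ap (S.pow S.B 1) (S.bul b))) S.B)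
  rw [icomp hS, pow_one hS, ← intbul hS, cassoc hS, ← hS.hBulApp]

theorem m_map_I (S : BIStruct α) (hS : S.IsExt) :
    mequiv S hS S.I = (mref S hS).combI := by
  apply Subtype.ext
  show S.bul S.I = S.comp (S.bul (S.ap S.I S.I)) (S.pow S.B 0)
  rw [hS.hI, show S.pow S.B 0 = S.I from rfl, compi hS]

theorem m_map_bul (S : BIStruct α) (hS : S.IsExt) (a : α) :
    mequiv S hS (S.bul a) = (mref S hS).bul (mequiv S hS a) := by
  apply Subtype.ext
  show S.bul (S.bul a)
      = S.comp (S.bul (S.ap (S.comp S.I (S.comp S.I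
          (S.comp (S.comp S.I (S.ap (S.pow S.B 1) (S.bul a))) S.B))) S.I)) (S.pow S.B 0)
  rw [icomp hS, icomp hS, icomp hS, pow_one hS, apc hS, hS.hLam,
      show S.ap (S.ap S.B (S.bul a)) S.I = S.bul a from compi hS _,
      show S.pow S.B 0 = S.I from rfl, compi hS]

theorem m_map_B (S : BIStruct α) (hS : S.IsExt) :
    mequiv S hS S.B = (mref S hS).combB := by
  apply Subtype.ext
  show S.bul S.B
      = S.comp (S.bul (S.ap
          (S.comp (S.bul (S.ap
            (S.comp (S.bul (S.ap
              (S.comp S.I (S.comp (S.comp S.I (S.ap (S.pow S.B 1) S.B)) S.B))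
              S.I)) (S.pow S.B 2))
            S.I)) (S.pow S.B 1))
          S.I)) (S.pow S.B 0)
  rw [curApI hS, curApI hS, icomp hS, icomp hS, pow_one hS, apc hS, hS.hLam,
      show S.ap (S.ap S.B S.B) S.I = S.B from compi hS _,
      show S.pow S.B 0 = S.I from rfl, compi hS]

end StmtAux

/-- Every extensional BI(_)•-algebra is isomorphic to one arising from a
reflexive object in a monoidal category. -/
theorem stmt_11 {α : Type u} (S : Paper.BIStruct α) (hS : S.IsExt) :
    Nonempty (Paper.ReflexiveModel S) :=
  ⟨{ C := StmtAux.MObj S hS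
     instC := StmtAux.mcat S hS
     instM := StmtAux.mmon S hS
     R := StmtAux.mref S hS
     equiv := StmtAux.mequiv S hS
     map_ap := StmtAux.m_map_ap S hS
     map_B := StmtAux.m_map_B S hS
     map_I := StmtAux.m_map_I S hS
     map_bul := StmtAux.m_map_bul S hS }⟩
end
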